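/- Under the operator setup below, for any α ∈ ℂ: if λ ∈ ℂ, λ ≠ 0, and φ^m(ψ(0,λ)) = 0 for some positive integer m, then λ = q^{−l} or λ = −q^{−l} for some integer l with 0 ≤ l ≤ m−1. -/
import Mathlib


noncomputable section

/-- The vector space with basis `ψ(l,λ)`, `l ∈ ℕ₀`, `λ ∈ ℂ∖{0}`. -/
abbrev Wsp : Type := (ℕ × ℂˣ) →₀ ℂ

/-- The basis vector `ψ(l,λ)`. -/
def psi (l : ℕ) (u : ℂˣ) : Wsp := Finsupp.single (l, u) 1

/-- The q-number `[l] = (q^l − q^(−l))/(q − q⁻¹)`. -/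
def qnum (q : ℂˣ) (l : ℕ) : ℂ := ((q : ℂ) ^ l - (q : ℂ)⁻¹ ^ l) / ((q : ℂ) - (q : ℂ)⁻¹)

/-- `φ(ψ(l,λ)) = −(q^l[l]/(q−q⁻¹))·ψ(l−1, q²λ) + αq(q^(2l) − λ)·ψ(l, q²λ)
  + q²(q^(2l) − λ²)·ψ(l+1, q²λ)` (the `ψ(l−1,·)` term has coefficient `[0] = 0` for `l = 0`). -/
def phi (q : ℂˣ) (α : ℂ) : Wsp →ₗ[ℂ] Wsp :=
  Finsupp.lsum ℂ fun i => LinearMap.toSpanSingleton ℂ Wsp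
    ((-((q : ℂ) ^ i.1 * qnum q i.1 / ((q : ℂ) - (q : ℂ)⁻¹))) • psi (i.1 - 1) (q ^ 2 * i.2) +
     (α * (q : ℂ) * ((q : ℂ) ^ (2 * i.1) - (i.2 : ℂ))) • psi i.1 (q ^ 2 * i.2) +
     ((q : ℂ) ^ 2 * ((q : ℂ) ^ (2 * i.1) - (i.2 : ℂ) ^ 2)) • psi (i.1 + 1) (q ^ 2 * i.2))

/-- `φ'(ψ(l,λ)) = λ⁻¹·(q^(1−l)[l]/(q−q⁻¹))·ψ(l−1, q⁻²λ)`. -/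
def phi' (q : ℂˣ) : Wsp →ₗ[ℂ] Wsp :=
  Finsupp.lsum ℂ fun i => LinearMap.toSpanSingleton ℂ Wsp
    ((((i.2 : ℂ))⁻¹ * ((q : ℂ) ^ ((1 : ℤ) - (i.1 : ℤ)) * qnum q i.1 / ((q : ℂ) - (q : ℂ)⁻¹))) •
      psi (i.1 - 1) ((q ^ 2)⁻¹ * i.2))

/-- `κ(ψ(l,λ)) = λ·ψ(l,λ)`. -/
def kappa : Wsp →ₗ[ℂ] Wsp :=
  Finsupp.lsum ℂ fun i => LinearMap.toSpanSingleton ℂ Wsp (((i.2 : ℂ)) • psi i.1 i.2)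

/-- `κ⁻¹(ψ(l,λ)) = λ⁻¹·ψ(l,λ)`. -/
def kappaInv : Wsp →ₗ[ℂ] Wsp :=
  Finsupp.lsum ℂ fun i => LinearMap.toSpanSingleton ℂ Wsp (((i.2 : ℂ))⁻¹ • psi i.1 i.2)

namespace Stmt14Aux

/-- The image of a basis vector under `phi`. -/
def Vvec (q : ℂˣ) (α : ℂ) (i : ℕ × ℂˣ) : Wsp :=
  (-((q : ℂ) ^ i.1 * qnum q i.1 / ((q : ℂ) - (q : ℂ)⁻¹))) • psi (i.1 - 1) (q ^ 2 * i.2) +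
  (α * (q : ℂ) * ((q : ℂ) ^ (2 * i.1) - (i.2 : ℂ))) • psi i.1 (q ^ 2 * i.2) +
  ((q : ℂ) ^ 2 * ((q : ℂ) ^ (2 * i.1) - (i.2 : ℂ) ^ 2)) • psi (i.1 + 1) (q ^ 2 * i.2)

lemma phi_apply (q : ℂˣ) (α : ℂ) (w : Wsp) (p : ℕ × ℂˣ) :
    phi q α w p = w.sum fun i c => c * Vvec q α i p := by
  rw [phi, Finsupp.lsum_apply, Finsupp.sum_apply]
  refine Finsupp.sum_congr fun i _ => ?_
  rw [LinearMap.toSpanSingleton_apply, Finsupp.smul_apply, smul_eq_mul]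
  rfl

lemma Vvec_apply_zero (q : ℂˣ) (α : ℂ) (i p : ℕ × ℂˣ)
    (h1 : p ≠ (i.1 - 1, q ^ 2 * i.2)) (h2 : p ≠ (i.1, q ^ 2 * i.2))
    (h3 : p ≠ (i.1 + 1, q ^ 2 * i.2)) : Vvec q α i p = 0 := by
  simp [Vvec, psi, Finsupp.single_apply, Ne.symm h1, Ne.symm h2, Ne.symm h3]

lemma Vvec_apply_top (q : ℂˣ) (α : ℂ) (k : ℕ) (v : ℂˣ) :
    Vvec q α (k, v) (k + 1, q ^ 2 * v) = (q : ℂ) ^ 2 * ((q : ℂ) ^ (2 * k) - (v : ℂ) ^ 2) := by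
  have h1 : k - 1 ≠ k + 1 := by omega
  have h2 : k ≠ k + 1 := by omega
  simp [Vvec, psi, Finsupp.single_apply, Prod.ext_iff, h1, h2]

lemma support_phi (q : ℂˣ) (α : ℂ) (w : Wsp) (k : ℕ)
    (hw : ∀ i ∈ w.support, i.1 ≤ k) :
    ∀ p ∈ (phi q α w).support, p.1 ≤ k + 1 := by
  intro p hp
  by_contra hpk
  push_neg at hpk
  apply Finsupp.mem_support_iff.mp hp
  rw [phi_apply, Finsupp.sum]
  apply Finset.sum_eq_zero
  intro i hi
  have hik := hw i hi
  rw [Vvec_apply_zero, mul_zero]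
  · intro he
    have := congrArg Prod.fst he
    simp only at this
    omega
  · intro he
    have := congrArg Prod.fst he
    simp only at this
    omega
  · intro he
    have := congrArg Prod.fst he
    simp only at this
    omega

lemma phi_apply_top (q : ℂˣ) (α : ℂ) (w : Wsp) (k : ℕ) (v : ℂˣ)
    (hw : ∀ i ∈ w.support, i.1 ≤ k) :
    phi q α w (k + 1, q ^ 2 * v) =
      w (k, v) * ((q : ℂ) ^ 2 * ((q : ℂ) ^ (2 * k) - (v : ℂ) ^ 2)) := by
  rw [phi_apply, Finsupp.sum, Finset.sum_eq_single ((k, v) : ℕ × ℂˣ)]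
  · exact congrArg _ (Vvec_apply_top q α k v)
  · intro i hi hne
    have hik := hw i hi
    rw [Vvec_apply_zero, mul_zero]
    · intro he
      have := congrArg Prod.fst he
      simp only at this
      omega
    · intro he
      have := congrArg Prod.fst he
      simp only at this
      omega
    · intro he
      rw [Prod.ext_iff] at he
      simp only at he
      refine hne (Prod.ext_iff.mpr ⟨by omega, ?_⟩)
      exact (mul_left_cancel he.2).symm
  · intro hkv
    rw [Finsupp.notMem_support_iff.mp hkv, zero_mul]

end Stmt14Aux

open Stmt14Aux in
/-- If `φ^m(ψ(0,λ)) = 0` for some `m ≥ 1`, then `λ = ±q^(−l)` for some `0 ≤ l ≤ m−1`. -/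
theorem stmt14 (q : ℂˣ) (hq' : ∀ k : ℕ, 0 < k → (q : ℂ) ^ k ≠ 1) (α : ℂ)
    (u : ℂˣ) (m : ℕ) (hm : 0 < m)
    (h : ((phi q α : Module.End ℂ Wsp) ^ m) (psi 0 u) = 0) :
    ∃ l : ℕ, l ≤ m - 1 ∧
      ((u : ℂ) = (q : ℂ) ^ (-(l : ℤ)) ∨ (u : ℂ) = -(q : ℂ) ^ (-(l : ℤ))) := by
  classical
  set c : ℕ → ℂ := fun l =>
    (q : ℂ) ^ 2 * ((q : ℂ) ^ (2 * l) - ((((q ^ 2 : ℂˣ) ^ l * u : ℂˣ) : ℂ)) ^ 2) with hc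
  have key : ∀ k : ℕ,
      (∀ i ∈ (((phi q α : Module.End ℂ Wsp) ^ k) (psi 0 u)).support, i.1 ≤ k) ∧
      (((phi q α : Module.End ℂ Wsp) ^ k) (psi 0 u)) (k, (q ^ 2) ^ k * u) =
        ∏ l ∈ Finset.range k, c l := by
    intro k
    induction k with
    | zero =>
      constructor
      · intro i hi
        rw [pow_zero, Module.End.one_apply] at hi
        simp only [psi, Finsupp.support_single_ne_zero _ (one_ne_zero), Finset.mem_singleton] at hi
        simp [hi]
      · simp [psi, Finsupp.single_apply]
    | succ k ih =>
      have hstep : (((phi q α : Module.End ℂ Wsp) ^ (k + 1)) (psi 0 u))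
          = phi q α (((phi q α : Module.End ℂ Wsp) ^ k) (psi 0 u)) := by
        rw [pow_succ']; rfl
      refine ⟨?_, ?_⟩
      · rw [hstep]
        exact support_phi q α _ k ih.1
      · have hpt : ((k + 1 : ℕ), (q ^ 2 : ℂˣ) ^ (k + 1) * u)
            = ((k + 1 : ℕ), q ^ 2 * ((q ^ 2 : ℂˣ) ^ k * u)) := by
          rw [pow_succ' (q ^ 2 : ℂˣ) k, mul_assoc]
        rw [hstep, hpt, phi_apply_top q α _ k ((q ^ 2 : ℂˣ) ^ k * u) ih.1, ih.2,
          Finset.prod_range_succ]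
  have hzero : ∏ l ∈ Finset.range m, c l = 0 := by
    rw [← (key m).2, h, Finsupp.coe_zero, Pi.zero_apply]
  obtain ⟨l, hl, hcl⟩ := Finset.prod_eq_zero_iff.mp hzero
  refine ⟨l, by have := Finset.mem_range.mp hl; omega, ?_⟩
  have hq0 : (q : ℂ) ≠ 0 := q.ne_zero
  have ha0 : ((q : ℂ) ^ l) ≠ 0 := pow_ne_zero _ hq0
  have hq2 : ((q : ℂ) ^ 2) ≠ 0 := pow_ne_zero _ hq0
  rw [hc] at hcl
  simp only [mul_eq_zero, sub_eq_zero] at hcl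
  have heq : (q : ℂ) ^ (2 * l) = ((((q ^ 2 : ℂˣ) ^ l * u : ℂˣ) : ℂ)) ^ 2 := by
    tauto
  have hcast : (((q ^ 2 : ℂˣ) ^ l * u : ℂˣ) : ℂ) = ((q : ℂ) ^ l) ^ 2 * (u : ℂ) := by
    push_cast
    ring_nf
  rw [hcast, pow_mul'] at heq
  -- heq : ((q:ℂ)^l)^2 = (((q:ℂ)^l)^2 * u)^2
  have hfac : ((u : ℂ) * (q : ℂ) ^ l - 1) * ((u : ℂ) * (q : ℂ) ^ l + 1)
      * (((q : ℂ) ^ l) ^ 2) = 0 := by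
    linear_combination -heq
  have hinv : (q : ℂ) ^ (-(l : ℤ)) = ((q : ℂ) ^ l)⁻¹ := by
    rw [zpow_neg, zpow_natCast]
  rcases mul_eq_zero.mp hfac with hf | hsq
  · rcases mul_eq_zero.mp hf with h1 | h2
    · left
      rw [hinv]
      field_simp
      first
      | linear_combination h1
      | linear_combination -h1
    · right
      rw [hinv]
      field_simp
      first
      | linear_combination h2
      | linear_combination -h2
  · exact absurd hsq (pow_ne_zero _ ha0)
end
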